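/- Let A be a strongly connected synchronizing n-state automaton and α the steady-state distribution of S = Σ_a p(a)[a] for some positive probability vector p. If at least n − c of the components of α are equal (for some c > 0), then 𝔠(A) ≤ 2^c (n−c+1)(n−1). -/

import Mathlib

/-!
Stationarity of `α` says that the weight `α(K) = ∑ i ∈ K, α i` of a set of states is the
`p`-average of the weights of its preimages under the letters. Hence if no word of length `< n`
increases the weight of a proper nonempty set `K`, every such word preserves it. The functions
`1_K ∘ act δ w` span a Krylov space that is already spanned by the words of length `< n`, so then
every word preserves the weight; this fails for a word sending all states outside `K`.
Starting from a singleton `{q}` and repeatedly replacing `K` by such a heavier preimage until it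
is all of `Q`, the concatenated words map every state to `q`. Each step costs at most `n - 1`
letters, and there are fewer steps than weights of subsets, of which there are at most
`2^c (n - c + 1)` since all but `c` coordinates of `α` are equal.
-/

open Matrix

/-- The 0-1 transition matrix of a letter: `(p,q)`-entry is 1 iff `δ q a = p`. -/
def letterMat {n k : ℕ} (δ : Fin n → Fin k → Fin n) (a : Fin k) :
    Matrix (Fin n) (Fin n) ℝ :=
  fun p q => if δ q a = p then 1 else 0

/-- The matrix of a word, satisfying `[u][K] = [K·u]`. -/
def wordMat {n k : ℕ} (δ : Fin n → Fin k → Fin n) (w : List (Fin k)) :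
    Matrix (Fin n) (Fin n) ℝ :=
  (w.reverse.map (letterMat δ)).prod

/-- The action of a word on a state. -/
def act {n k : ℕ} (δ : Fin n → Fin k → Fin n) (w : List (Fin k)) (q : Fin n) : Fin n :=
  w.foldl δ q

/-- A word is a reset word if it maps all states to one state. -/
def IsReset {n k : ℕ} (δ : Fin n → Fin k → Fin n) (w : List (Fin k)) : Prop :=
  ∀ p q : Fin n, act δ w p = act δ w q

open Finset

section Krylov

variable {K V ι : Type*} [DivisionRing K] [AddCommGroup V] [Module K V] [FiniteDimensional K V]

theorem Submodule.exists_le_finrank_succ_le_of_monotone {Y : ℕ → Submodule K V}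
    (hY : Monotone Y) : ∃ j ≤ Module.finrank K V, Y (j + 1) ≤ Y j := by
  by_contra! h
  have hrank : ∀ j ≤ Module.finrank K V + 1, j ≤ Module.finrank K (Y j) := by
    intro j hj
    induction j with
    | zero => exact Nat.zero_le _
    | succ j ih =>
      have hlt : Y j < Y (j + 1) := lt_of_le_not_ge (hY j.le_succ) (h j (by omega))
      have := Submodule.finrank_lt_finrank_of_lt hlt
      have := ih (by omega)
      omega
  have := hrank _ le_rfl
  have := Submodule.finrank_le (Y (Module.finrank K V + 1))
  omega

theorem mem_span_image_length_lt_finrank (L : ι → V →ₗ[K] V) (f : List ι → V)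
    (hf : ∀ b u, f (b :: u) = L b (f u)) (w : List ι) :
    f w ∈ Submodule.span K (f '' {u | u.length < Module.finrank K V}) := by
  set Y : ℕ → Submodule K V := fun j => Submodule.span K (f '' {u | u.length < j})
  have hY : Monotone Y := fun i j hij =>
    Submodule.span_mono (Set.image_mono fun u hu => lt_of_lt_of_le hu hij)
  obtain ⟨j, hj, hstable⟩ := Submodule.exists_le_finrank_succ_le_of_monotone hY
  have hsucc : ∀ b, (Y j).map (L b) ≤ Y (j + 1) := by
    intro b
    rw [Submodule.map_span, Submodule.span_le]
    rintro _ ⟨_, ⟨u, hu, rfl⟩, rfl⟩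
    exact Submodule.subset_span ⟨b :: u, by simpa using hu, hf b u⟩
  have hmem : ∀ w, f w ∈ Y j := by
    intro w
    induction w with
    | nil => exact hstable (Submodule.subset_span ⟨[], Nat.succ_pos j, rfl⟩)
    | cons b u ih => rw [hf]; exact hstable (hsucc b (Submodule.mem_map_of_mem ih))
  exact hY hj (hmem w)

end Krylov

section SubsetSums

variable {ι : Type*} [Fintype ι]

noncomputable def subsetSums (α : ι → ℝ) : Finset ℝ :=
  univ.image fun K : Finset ι => ∑ i ∈ K, α i

theorem card_subsetSums_le [DecidableEq ι] (α : ι → ℝ) (T : Finset ι)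
    (hT : ∀ i ∈ T, ∀ j ∈ T, α i = α j) :
    #(subsetSums α) ≤ 2 ^ (Fintype.card ι - #T) * (#T + 1) := by
  obtain ⟨β, hβ⟩ : ∃ β, ∀ i ∈ T, α i = β :=
    T.eq_empty_or_nonempty.elim (fun h => ⟨0, by simp [h]⟩)
      fun ⟨j, hj⟩ => ⟨α j, fun i hi => hT i hi j hj⟩
  have hsub : subsetSums α ⊆
      (Tᶜ.powerset ×ˢ range (#T + 1)).image fun x => ∑ i ∈ x.1, α i + x.2 * β := by
    intro x hx
    obtain ⟨K, -, rfl⟩ := mem_image.1 hx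
    refine mem_image.2 ⟨(K \ T, #(K ∩ T)), mem_product.2 ⟨?_, ?_⟩, ?_⟩
    · exact mem_powerset.2 (sdiff_eq_inter_compl K T ▸ inter_subset_right)
    · exact mem_range.2 (Nat.lt_succ_of_le (card_le_card inter_subset_right))
    · rw [← sum_inter_add_sum_sdiff K T α, sum_congr rfl fun i hi => hβ i (mem_inter.1 hi).2,
        sum_const, nsmul_eq_mul, add_comm]
  calc #(subsetSums α) ≤ _ := card_le_card hsub
    _ ≤ _ := card_image_le
    _ = 2 ^ (Fintype.card ι - #T) * (#T + 1) := by
      rw [card_product, card_powerset, card_range, card_compl]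

end SubsetSums

theorem two_pow_sub_mul_succ_le {n s t : ℕ} (hst : s ≤ t) (htn : t ≤ n) :
    2 ^ (n - t) * (t + 1) ≤ 2 ^ (n - s) * (s + 1) := by
  induction t, hst using Nat.le_induction with
  | base => exact le_rfl
  | succ t hst ih =>
    calc 2 ^ (n - (t + 1)) * (t + 1 + 1) ≤ 2 ^ (n - (t + 1)) * (2 * (t + 1)) := by
          gcongr; omega
      _ = 2 ^ (n - t) * (t + 1) := by
          rw [← mul_assoc, ← pow_succ, show n - (t + 1) + 1 = n - t by omega]
      _ ≤ 2 ^ (n - s) * (s + 1) := ih (by omega)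

theorem card_subsetSums_le_two_pow_mul {n c : ℕ} (α : Fin n → ℝ) {T : Finset (Fin n)}
    (hT : n - c ≤ #T) (hTeq : ∀ i ∈ T, ∀ j ∈ T, α i = α j) :
    #(subsetSums α) ≤ 2 ^ c * (n - c + 1) := by
  have hTn : #T ≤ n := by simpa using card_le_univ T
  calc #(subsetSums α) ≤ 2 ^ (n - #T) * (#T + 1) := by
        simpa using card_subsetSums_le α T hTeq
    _ ≤ 2 ^ (n - (n - c)) * (n - c + 1) := two_pow_sub_mul_succ_le hT hTn
    _ ≤ 2 ^ c * (n - c + 1) := by gcongr <;> omega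

theorem eq_of_sum_mul_eq_of_le {ι : Type*} [Fintype ι] {p x : ι → ℝ} {c : ℝ}
    (hp : ∀ i, 0 < p i) (hp1 : ∑ i, p i = 1) (hx : ∀ i, x i ≤ c)
    (hsum : ∑ i, p i * x i = c) (i : ι) : x i = c := by
  have hsum' : ∑ i, p i * x i = ∑ i, p i * c := by rw [hsum, ← sum_mul, hp1, one_mul]
  have hle : ∀ i ∈ univ, p i * x i ≤ p i * c := fun i _ =>
    mul_le_mul_of_nonneg_left (hx i) (hp i).le
  exact mul_left_cancel₀ (hp i).ne' ((sum_eq_sum_iff_of_le hle).1 hsum' i (mem_univ i))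

section Automaton

variable {n k : ℕ} {δ : Fin n → Fin k → Fin n}

theorem act_append (u v : List (Fin k)) (q : Fin n) :
    act δ (u ++ v) q = act δ v (act δ u q) :=
  List.foldl_append

theorem exists_word_forall_act_eq (hsc : ∀ s q : Fin n, ∃ w : List (Fin k), act δ w s = q)
    (hsync : ∃ w, IsReset δ w) (q : Fin n) : ∃ w : List (Fin k), ∀ s, act δ w s = q := by
  obtain ⟨w₀, hw₀⟩ := hsync
  obtain ⟨u, hu⟩ := hsc (act δ w₀ q) q
  exact ⟨w₀ ++ u, fun s => by rw [act_append, hw₀ s q, hu]⟩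

theorem vecMul_letterMat (a : Fin k) (f : Fin n → ℝ) :
    f ᵥ* letterMat δ a = fun q => f (δ q a) := by
  funext q
  simp [vecMul, dotProduct, letterMat]

variable {p : Fin k → ℝ} {α : Fin n → ℝ}

theorem dotProduct_eq_sum_mul_dotProduct_letter
    (hαeig : (∑ a, p a • letterMat δ a).mulVec α = α) (f : Fin n → ℝ) :
    f ⬝ᵥ α = ∑ a, p a * ((fun q => f (δ q a)) ⬝ᵥ α) := by
  conv_lhs => rw [← hαeig]
  simp [dotProduct_mulVec, vecMul_sum, sum_dotProduct, vecMul_smul, vecMul_letterMat]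

theorem dotProduct_comp_act_eq_of_le (hp : ∀ a, 0 < p a) (hp1 : ∑ a, p a = 1)
    (hαeig : (∑ a, p a • letterMat δ a).mulVec α = α) (h : Fin n → ℝ) {N : ℕ}
    (hle : ∀ w : List (Fin k), w.length < N → (h ∘ act δ w) ⬝ᵥ α ≤ h ⬝ᵥ α)
    (w : List (Fin k)) (hw : w.length < N) : (h ∘ act δ w) ⬝ᵥ α = h ⬝ᵥ α := by
  induction w with
  | nil => rfl
  | cons b u ih =>
    have hu : u.length < N := by simp only [List.length_cons] at hw; omega
    refine eq_of_sum_mul_eq_of_le hp hp1 (fun a => hle (a :: u) (by simpa using hw)) ?_ b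
    rw [← ih hu]
    exact (dotProduct_eq_sum_mul_dotProduct_letter hαeig (h ∘ act δ u)).symm

theorem dotProduct_comp_act_eq_zero (h : Fin n → ℝ)
    (hshort : ∀ w : List (Fin k), w.length < n → (h ∘ act δ w) ⬝ᵥ α = 0)
    (w : List (Fin k)) : (h ∘ act δ w) ⬝ᵥ α = 0 := by
  have hmem := mem_span_image_length_lt_finrank (fun b => LinearMap.funLeft ℝ ℝ (δ · b))
    (fun w => h ∘ act δ w) (fun _ _ => rfl) w
  rw [Module.finrank_fin_fun] at hmem
  have hker : Submodule.span ℝ ((fun w => h ∘ act δ w) '' {u : List (Fin k) | u.length < n})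
      ≤ LinearMap.ker ((dotProductBilin ℝ ℝ).flip α) := by
    rw [Submodule.span_le]
    rintro _ ⟨u, hu, rfl⟩
    exact hshort u hu
  simpa using hker hmem

theorem dotProduct_comp_act_eq (hα1 : ∑ i, α i = 1) (h : Fin n → ℝ)
    (hshort : ∀ w : List (Fin k), w.length < n → (h ∘ act δ w) ⬝ᵥ α = h ⬝ᵥ α)
    (w : List (Fin k)) : (h ∘ act δ w) ⬝ᵥ α = h ⬝ᵥ α := by
  -- Centring `h` turns preservation of `h ⬝ᵥ α` into vanishing of a linear functional.
  have hcentred : ∀ w : List (Fin k), ((fun q => h q - h ⬝ᵥ α) ∘ act δ w) ⬝ᵥ α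
      = (h ∘ act δ w) ⬝ᵥ α - h ⬝ᵥ α := by
    intro w
    simp only [dotProduct, Function.comp_apply, sub_mul, sum_sub_distrib, ← mul_sum, hα1,
      mul_one]
  have := dotProduct_comp_act_eq_zero _ (fun u hu => by rw [hcentred, hshort u hu, sub_self]) w
  rwa [hcentred, sub_eq_zero] at this

theorem exists_word_sum_lt_sum_preimage (hreach : ∀ q, ∃ w : List (Fin k), ∀ s, act δ w s = q)
    (hp : ∀ a, 0 < p a) (hp1 : ∑ a, p a = 1) (hαpos : ∀ i, 0 < α i) (hα1 : ∑ i, α i = 1)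
    (hαeig : (∑ a, p a • letterMat δ a).mulVec α = α)
    {K : Finset (Fin n)} (hK : K.Nonempty) (hKu : K ≠ univ) :
    ∃ w : List (Fin k), w.length < n ∧ ∑ i ∈ K, α i < ∑ q ∈ {q | act δ w q ∈ K}, α q := by
  set h : Fin n → ℝ := fun q => if q ∈ K then 1 else 0
  have hval : ∀ w : List (Fin k), (h ∘ act δ w) ⬝ᵥ α = ∑ q ∈ {q | act δ w q ∈ K}, α q := by
    intro w
    simp [h, dotProduct, sum_filter]
  have hval0 : h ⬝ᵥ α = ∑ i ∈ K, α i := by simp [h, dotProduct]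
  by_contra! hle
  have hpres := dotProduct_comp_act_eq hα1 h
    (dotProduct_comp_act_eq_of_le hp hp1 hαeig h fun w hw => by rw [hval, hval0]; exact hle w hw)
  obtain ⟨q, hq⟩ := not_forall.1 fun hall => hKu (eq_univ_iff_forall.2 hall)
  obtain ⟨w, hw⟩ := hreach q
  have hzero : (h ∘ act δ w) ⬝ᵥ α = 0 := by simp [h, Function.comp_def, hw, hq]
  have hpos : 0 < ∑ i ∈ K, α i := sum_pos (fun i _ => hαpos i) hK
  linarith [hpres w]

theorem exists_word_forall_act_mem (hreach : ∀ q, ∃ w : List (Fin k), ∀ s, act δ w s = q)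
    (hp : ∀ a, 0 < p a) (hp1 : ∑ a, p a = 1) (hαpos : ∀ i, 0 < α i) (hα1 : ∑ i, α i = 1)
    (hαeig : (∑ a, p a • letterMat δ a).mulVec α = α) (K : Finset (Fin n)) (hK : K.Nonempty) :
    ∃ w : List (Fin k), (∀ q, act δ w q ∈ K) ∧
      w.length ≤ #{x ∈ subsetSums α | ∑ i ∈ K, α i < x} * (n - 1) := by
  induction hm : #{x ∈ subsetSums α | ∑ i ∈ K, α i < x} using Nat.strong_induction_on
    generalizing K with
  | _ m ih =>
  by_cases hKu : K = univ
  · exact ⟨[], fun q => hKu ▸ mem_univ _, by simp⟩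
  obtain ⟨v, hvn, hv⟩ := exists_word_sum_lt_sum_preimage hreach hp hp1 hαpos hα1 hαeig hK hKu
  set K' : Finset (Fin n) := {q | act δ v q ∈ K}
  have hK' : K'.Nonempty :=
    nonempty_of_sum_ne_zero ((sum_pos (fun i _ => hαpos i) hK).trans hv).ne'
  have hssub : {x ∈ subsetSums α | ∑ i ∈ K', α i < x} ⊂ {x ∈ subsetSums α | ∑ i ∈ K, α i < x} := by
    refine (ssubset_iff_of_subset fun x => ?_).2 ⟨_, ?_, fun hx => (mem_filter.1 hx).2.false⟩
    · simp only [mem_filter]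
      exact fun hx => ⟨hx.1, hv.trans hx.2⟩
    · exact mem_filter.2 ⟨mem_image_of_mem _ (mem_univ K'), hv⟩
  obtain ⟨w, hw, hlen⟩ := ih _ (hm ▸ card_lt_card hssub) K' hK' rfl
  refine ⟨w ++ v, fun q => ?_, ?_⟩
  · rw [act_append]
    exact (mem_filter.1 (hw q)).2
  · rw [List.length_append, ← hm]
    calc w.length + v.length ≤ (#{x ∈ subsetSums α | ∑ i ∈ K', α i < x} + 1) * (n - 1) := by
          rw [add_one_mul]; omega
      _ ≤ _ := Nat.mul_le_mul_right _ (card_lt_card hssub)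

end Automaton

theorem stmt10_general {n k : ℕ} (hn : 2 ≤ n) (δ : Fin n → Fin k → Fin n)
    (hsc : ∀ s q : Fin n, ∃ w : List (Fin k), act δ w s = q)
    (hsync : ∃ w, IsReset δ w)
    (p : Fin k → ℝ) (hp : ∀ a, 0 < p a) (hp1 : ∑ a, p a = 1)
    (α : Fin n → ℝ) (hαpos : ∀ i, 0 < α i) (hα1 : ∑ i, α i = 1)
    (hαeig : (∑ a, p a • letterMat δ a).mulVec α = α)
    (c : ℕ)
    (heq : ∃ T : Finset (Fin n), n - c ≤ T.card ∧
      ∀ i ∈ T, ∀ j ∈ T, α i = α j)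
    (r : ℕ)
    (hr : IsLeast {t : ℕ | ∃ w : List (Fin k), IsReset δ w ∧ w.length = t} r) :
    r ≤ 2 ^ c * (n - c + 1) * (n - 1) := by
  obtain ⟨T, hT, hTeq⟩ := heq
  obtain ⟨w, hw, hlen⟩ := exists_word_forall_act_mem (exists_word_forall_act_eq hsc hsync)
    hp hp1 hαpos hα1 hαeig {⟨0, by omega⟩} (singleton_nonempty _)
  have hreset : IsReset δ w := fun s t => by rw [mem_singleton.1 (hw s), mem_singleton.1 (hw t)]
  calc r ≤ w.length := hr.2 ⟨w, hreset, rfl⟩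
    _ ≤ #(subsetSums α) * (n - 1) := hlen.trans (Nat.mul_le_mul_right _ (card_filter_le _ _))
    _ ≤ 2 ^ c * (n - c + 1) * (n - 1) :=
      Nat.mul_le_mul_right _ (card_subsetSums_le_two_pow_mul α hT hTeq)

/-- If at least `n - c` of the components of the steady-state distribution `α`
are equal (for some `c > 0`), then the reset length is at most
`2^c (n-c+1)(n-1)`. -/
theorem stmt10 {n k : ℕ} (hn : 2 ≤ n) (δ : Fin n → Fin k → Fin n)
    (hsc : ∀ s q : Fin n, ∃ w : List (Fin k), act δ w s = q)
    (hsync : ∃ w, IsReset δ w)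
    (p : Fin k → ℝ) (hp : ∀ a, 0 < p a) (hp1 : ∑ a, p a = 1)
    (α : Fin n → ℝ) (hαpos : ∀ i, 0 < α i) (hα1 : ∑ i, α i = 1)
    (hαeig : (∑ a, p a • letterMat δ a).mulVec α = α)
    (c : ℕ) (hc : 0 < c)
    (heq : ∃ T : Finset (Fin n), n - c ≤ T.card ∧
      ∀ i ∈ T, ∀ j ∈ T, α i = α j)
    (r : ℕ)
    (hr : IsLeast {t : ℕ | ∃ w : List (Fin k), IsReset δ w ∧ w.length = t} r) :
    r ≤ 2 ^ c * (n - c + 1) * (n - 1) :=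
  stmt10_general hn δ hsc hsync p hp hp1 α hαpos hα1 hαeig c heq r hr
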